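/- arXiv:1610.05939 — 4 statements merged into one kernel-verified Lean document; each statement's English description precedes it below -/
import Mathlib

section
/- Let A be a unital C*-algebra, x ∈ A, and λ > 0. Then ‖x‖ ≤ λ if and only if there exists y ∈ A such that (x*x)/λ² + y*y − y − y* = 0. Moreover, in this case y can be chosen to be a positive contraction, namely y = 1 − √(1 − x*x/λ²). -/
/-!
Put `a = λ⁻² x*x`, a positive element with `‖a‖ = ‖x‖²/λ²`, so `‖x‖ ≤ λ` iff `a ≤ 1`.
The equation `a + y*y - y - y* = 0` says exactly `1 - a = (1 - y)*(1 - y)`. Hence a solution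
forces `1 - a ≥ 0`, and conversely, when `0 ≤ 1 - a ≤ 1`, the positive contraction
`s = √(1 - a)` gives the solution `y = 1 - s`, itself a positive contraction.
-/

section StarRing

variable {R : Type*} [Ring R] [StarRing R]

lemma star_one_sub_mul_one_sub (y : R) :
    star (1 - y) * (1 - y) = 1 - y - star y + star y * y := by
  simp only [star_sub, star_one, sub_mul, mul_sub, one_mul, mul_one]
  abel

lemma add_star_mul_self_sub_sub_star_eq_zero_iff (a y : R) :
    a + star y * y - y - star y = 0 ↔ 1 - a = star (1 - y) * (1 - y) := by
  have h : 1 - a - star (1 - y) * (1 - y) = -(a + star y * y - y - star y) := by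
    rw [star_one_sub_mul_one_sub]
    abel
  rw [← sub_eq_zero (a := 1 - a), h, neg_eq_zero]

lemma le_one_of_add_star_mul_self_sub_sub_star_eq_zero [PartialOrder R] [StarOrderedRing R]
    {a y : R} (h : a + star y * y - y - star y = 0) : a ≤ 1 := by
  rw [← sub_nonneg, (add_star_mul_self_sub_sub_star_eq_zero_iff a y).1 h]
  exact star_mul_self_nonneg _

end StarRing

section CStarAlgebra

variable {A : Type*} [CStarAlgebra A] [PartialOrder A] [StarOrderedRing A]

lemma norm_le_iff_inv_sq_smul_star_mul_self_le_one (x : A) {l : ℝ} (hl : 0 < l) :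
    ‖x‖ ≤ l ↔ (l ^ 2)⁻¹ • (star x * x) ≤ 1 := by
  have hl2 : (0 : ℝ) < l ^ 2 := by positivity
  rw [← CStarAlgebra.norm_le_one_iff_of_nonneg _
      (smul_nonneg (inv_nonneg.2 hl2.le) (star_mul_self_nonneg x)),
    norm_smul, CStarRing.norm_star_mul_self, Real.norm_of_nonneg (inv_nonneg.2 hl2.le),
    inv_mul_le_iff₀ hl2, mul_one, ← sq, pow_le_pow_iff_left₀ (norm_nonneg x) hl.le two_ne_zero]

lemma CFC.sqrt_one_sub_le_one {a : A} (ha : 0 ≤ a) : CFC.sqrt (1 - a) ≤ 1 := by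
  simpa only [CFC.sqrt_one] using CFC.sqrt_le_sqrt _ _ (sub_le_self 1 ha)

lemma add_star_mul_self_sub_sub_star_eq_zero_of_one_sub_sqrt {a : A} (ha : a ≤ 1) :
    a + star (1 - CFC.sqrt (1 - a)) * (1 - CFC.sqrt (1 - a)) - (1 - CFC.sqrt (1 - a)) -
      star (1 - CFC.sqrt (1 - a)) = 0 := by
  have hs : star (CFC.sqrt (1 - a)) = CFC.sqrt (1 - a) :=
    (IsSelfAdjoint.of_nonneg (CFC.sqrt_nonneg _)).star_eq
  rw [add_star_mul_self_sub_sub_star_eq_zero_iff, sub_sub_cancel, hs, ← sq,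
    CFC.sq_sqrt _ (sub_nonneg.2 ha)]

end CStarAlgebra

/-- Let `A` be a unital C*-algebra, `x ∈ A`, `λ > 0`.  Then `‖x‖ ≤ λ` iff
there exists `y ∈ A` with `(x*x)/λ² + y*y − y − y* = 0`; moreover, in that case `y` can be
chosen to be a positive contraction, namely `y = 1 − √(1 − x*x/λ²)`. -/
theorem stmt0 {A : Type*} [CStarAlgebra A] [PartialOrder A] [StarOrderedRing A]
    (x : A) (l : ℝ) (hl : 0 < l) :
    (‖x‖ ≤ l ↔ ∃ y : A, ((l ^ 2)⁻¹ : ℝ) • (star x * x) + star y * y - y - star y = 0) ∧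
    (‖x‖ ≤ l →
      ∃ y : A, ((l ^ 2)⁻¹ : ℝ) • (star x * x) + star y * y - y - star y = 0 ∧
        0 ≤ y ∧ y ≤ 1 ∧
        y = (1 : A) - CFC.sqrt ((1 : A) - ((l ^ 2)⁻¹ : ℝ) • (star x * x))) := by
  have ha : 0 ≤ ((l ^ 2)⁻¹ : ℝ) • (star x * x) :=
    smul_nonneg (by positivity) (star_mul_self_nonneg x)
  have hsol : ‖x‖ ≤ l → ∃ y : A, ((l ^ 2)⁻¹ : ℝ) • (star x * x) + star y * y - y - star y = 0 ∧
      0 ≤ y ∧ y ≤ 1 ∧ y = (1 : A) - CFC.sqrt ((1 : A) - ((l ^ 2)⁻¹ : ℝ) • (star x * x)) :=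
    fun hx => ⟨_, add_star_mul_self_sub_sub_star_eq_zero_of_one_sub_sqrt
      ((norm_le_iff_inv_sq_smul_star_mul_self_le_one x hl).1 hx),
      sub_nonneg.2 (CFC.sqrt_one_sub_le_one ha), sub_le_self 1 (CFC.sqrt_nonneg _), rfl⟩
  refine ⟨⟨fun hx => (hsol hx).imp fun _ hy => hy.1, fun ⟨_, hy⟩ => ?_⟩, hsol⟩
  exact (norm_le_iff_inv_sq_smul_star_mul_self_le_one x hl).2
    (le_one_of_add_star_mul_self_sub_sub_star_eq_zero hy)
end

section
/- Let G be a group acting on a unital C*-algebra D via α. Let q ∈ D be a projection with q · α_g(q) = 0 for all g ∈ G with g ≠ e, and let t ∈ D be an isometry with t* q t = 1. For a finite nonempty subset K ⊆ G, define s = |K|^{-1/2} · Σ_{g∈K} α_g(q t). Then s is an isometry: s*s = 1. -/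
/-! The translates `α_g(q t)`, `g ∈ K`, are orthonormal: for `g ≠ h` the projections `α_g q` and
`α_h q` are orthogonal (apply `α_g` to `q α_{g⁻¹h}(q) = 0`), while for `g = h` we get
`α_g(t* q q t) = α_g(t* q t) = 1`. Hence `(Σ α_g(q t))* (Σ α_g(q t)) = |K|`, and dividing by
`√|K|` on both sides gives an isometry. -/

section Orthonormal

variable {R ι : Type*} [NonAssocSemiring R] [StarRing R]

theorem star_sum_mul_sum_of_orthonormal [DecidableEq ι] (v : ι → R) (K : Finset ι)
    (hv : ∀ i ∈ K, ∀ j ∈ K, star (v i) * v j = if i = j then 1 else 0) :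
    star (∑ i ∈ K, v i) * ∑ i ∈ K, v i = K.card := by
  rw [star_sum, Finset.sum_mul_sum]
  calc ∑ i ∈ K, ∑ j ∈ K, star (v i) * v j
      = ∑ i ∈ K, ∑ j ∈ K, (if i = j then 1 else 0 : R) :=
        Finset.sum_congr rfl fun i hi => Finset.sum_congr rfl fun j hj => hv i hi j hj
    _ = K.card := by simp

end Orthonormal

theorem star_inv_sqrt_smul_mul_self_eq_one {A : Type*} [Ring A] [StarRing A] [Algebra ℂ A]
    [StarModule ℂ A] {n : ℕ} (hn : n ≠ 0) {x : A} (hx : star x * x = n) :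
    star ((Real.sqrt n : ℂ)⁻¹ • x) * ((Real.sqrt n : ℂ)⁻¹ • x) = 1 := by
  have hsqrt : (Real.sqrt n : ℂ) ≠ 0 := by
    exact_mod_cast (Real.sqrt_pos.mpr (by exact_mod_cast Nat.pos_of_ne_zero hn)).ne'
  have hscalar : (Real.sqrt n : ℂ)⁻¹ * (Real.sqrt n : ℂ)⁻¹ * n = 1 := by
    rw [← mul_inv, ← Complex.ofReal_mul, Real.mul_self_sqrt (Nat.cast_nonneg n)]
    exact inv_mul_cancel₀ (by exact_mod_cast hn)
  rw [star_smul, smul_mul_smul_comm, hx, star_inv₀, Complex.star_def, Complex.conj_ofReal,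
    ← map_natCast (algebraMap ℂ A), Algebra.smul_def, ← map_mul, hscalar, map_one]

section OrthogonalTranslates

variable {R D G : Type*} [CommSemiring R] [Semiring D] [StarRing D] [Algebra R D] [Group G]
  (α : G → D ≃⋆ₐ[R] D) (hα_mul : ∀ g h : G, ∀ a : D, α (g * h) a = α g (α h a))
  {q : D}

include hα_mul in
theorem map_mul_map_eq_zero_of_ne (hq_orth : ∀ g : G, g ≠ 1 → q * α g q = 0) {g h : G}
    (hgh : g ≠ h) : α g q * α h q = 0 := by
  have hne : g⁻¹ * h ≠ 1 := fun hc => hgh (inv_mul_eq_one.mp hc)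
  rw [← mul_inv_cancel_left g h, hα_mul, ← map_mul, hq_orth _ hne, map_zero]

include hα_mul in
theorem star_map_mul_map_eq_ite [DecidableEq G] (hq_sa : IsSelfAdjoint q) (hq_idem : q * q = q)
    (hq_orth : ∀ g : G, g ≠ 1 → q * α g q = 0) {t : D} (htqt : star t * q * t = 1) (g h : G) :
    star (α g (q * t)) * α h (q * t) = if g = h then 1 else 0 := by
  have hstar : star (α g (q * t)) = α g (star t) * α g q := by
    rw [← map_star, star_mul, hq_sa.star_eq, map_mul]
  rw [hstar, map_mul]
  split_ifs with hgh
  · subst hgh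
    rw [← map_mul, ← map_mul, ← map_mul, mul_assoc (star t), ← mul_assoc q, hq_idem,
      ← mul_assoc, htqt, map_one]
  · rw [mul_assoc, ← mul_assoc (α g q), map_mul_map_eq_zero_of_ne α hα_mul hq_orth hgh,
      zero_mul, mul_zero]

end OrthogonalTranslates

theorem stmt8_general {D : Type*} [CStarAlgebra D] {G : Type*} [Group G]
    (α : G → D ≃⋆ₐ[ℂ] D)
    (hα_mul : ∀ g h : G, ∀ a : D, α (g * h) a = α g (α h a))
    (q : D) (hq_sa : IsSelfAdjoint q) (hq_idem : q * q = q)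
    (hq_orth : ∀ g : G, g ≠ 1 → q * α g q = 0)
    (t : D) (htqt : star t * q * t = 1)
    (K : Finset G) (hK : K.Nonempty) :
    star (((Real.sqrt K.card : ℂ))⁻¹ • ∑ g ∈ K, α g (q * t)) *
      (((Real.sqrt K.card : ℂ))⁻¹ • ∑ g ∈ K, α g (q * t)) = 1 := by
  classical
  refine star_inv_sqrt_smul_mul_self_eq_one hK.card_pos.ne' ?_
  exact star_sum_mul_sum_of_orthonormal _ K fun g _ h _ =>
    star_map_mul_map_eq_ite α hα_mul hq_sa hq_idem hq_orth htqt g h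

/-- (Følner averaging.)  Let `G` act on a unital C*-algebra `D` via `α`,
let `q` be a projection with `q · α_g(q) = 0` for all `g ≠ e`, and let `t` be an isometry
with `t* q t = 1`.  For a finite nonempty `K ⊆ G`, the element
`s = |K|^{-1/2} · Σ_{g∈K} α_g(q t)` is an isometry: `s*s = 1`. -/
theorem stmt8 {D : Type*} [CStarAlgebra D] {G : Type*} [Group G]
    (α : G → D ≃⋆ₐ[ℂ] D)
    (hα_mul : ∀ g h : G, ∀ a : D, α (g * h) a = α g (α h a))
    (hα_one : ∀ a : D, α 1 a = a)
    (q : D) (hq_sa : IsSelfAdjoint q) (hq_idem : q * q = q)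
    (hq_orth : ∀ g : G, g ≠ 1 → q * α g q = 0)
    (t : D) (ht_isom : star t * t = 1) (htqt : star t * q * t = 1)
    (K : Finset G) (hK : K.Nonempty) :
    star (((Real.sqrt K.card : ℂ))⁻¹ • ∑ g ∈ K, α g (q * t)) *
      (((Real.sqrt K.card : ℂ))⁻¹ • ∑ g ∈ K, α g (q * t)) = 1 :=
  stmt8_general α hα_mul q hq_sa hq_idem hq_orth t htqt K hK
end

section
/- Let G be a group acting on a unital C*-algebra D via α, let q ∈ D be a projection with q α_g(q) = 0 for all g ≠ e, let t ∈ D be an isometry with t*qt = 1, and for a finite nonempty K ⊆ G set s = |K|^{-1/2} Σ_{g∈K} α_g(qt). Then (Σ_{g∈K} α_g(q)) · s = s, and for any g₀ ∈ G ∖ K one has Σ_{g∈K} α_g(q) ≤ 1 − α_{g₀}(q). In particular, if G ∖ K is nonempty and q ≠ 0, then s is not a unitary. -/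
/-!
Since `α` is an action, `α g q * α h q = α g (q * α (g⁻¹ h) q) = 0` for `g ≠ h`, so the translates
`α g q` are pairwise orthogonal projections. Hence `P = Σ_{g∈K} α g q` is a projection fixing every
`α h q` with `h ∈ K`, which gives `P s = s`; and for `g₀ ∉ K`, `P + α g₀ q` is again a projection,
hence `≤ 1`. If `s` were unitary, `P = P s s* = s s* = 1`, forcing `0 ≤ α g₀ q ≤ 0` and so `q = 0`.
-/

lemma OrthogonalIdempotents.sum_mul_of_mem {R I : Type*} [Semiring R] {e : I → R}
    (he : OrthogonalIdempotents e) {i : I} {s : Finset I} (h : i ∈ s) :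
    (∑ j ∈ s, e j) * e i = e i := by
  classical
  simp [Finset.sum_mul, he.mul_eq, h]

lemma OrthogonalIdempotents.sum_mul_of_notMem {R I : Type*} [Semiring R] {e : I → R}
    (he : OrthogonalIdempotents e) {i : I} {s : Finset I} (h : i ∉ s) :
    (∑ j ∈ s, e j) * e i = 0 := by
  classical
  simp [Finset.sum_mul, he.mul_eq, h]

lemma OrthogonalIdempotents.isStarProjection_sum {R I : Type*} [Semiring R] [StarRing R]
    {e : I → R} (he : OrthogonalIdempotents e) (hsa : ∀ i, IsSelfAdjoint (e i)) (s : Finset I) :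
    IsStarProjection (∑ i ∈ s, e i) :=
  ⟨he.isIdempotentElem_sum, isSelfAdjoint_sum s fun i _ => hsa i⟩

lemma eq_one_of_mul_eq_self_of_mem_unitary {R : Type*} [Monoid R] [StarMul R] {p s : R}
    (hs : s ∈ unitary R) (h : p * s = s) : p = 1 := by
  calc p = p * s * star s := by rw [mul_assoc, Unitary.mul_star_self_of_mem hs, mul_one]
    _ = 1 := by rw [h, Unitary.mul_star_self_of_mem hs]

lemma orthogonalIdempotents_translates {G R F : Type*} [Group G] [Semiring R] [FunLike F R R]
    [RingHomClass F R R] (α : G → F) (hα_mul : ∀ g h : G, ∀ a : R, α (g * h) a = α g (α h a))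
    {q : R} (hq_idem : IsIdempotentElem q) (hq_orth : ∀ g : G, g ≠ 1 → q * α g q = 0) :
    OrthogonalIdempotents fun g => α g q where
  idem g := hq_idem.map (α g)
  ortho g h hgh := by
    have hne : g⁻¹ * h ≠ 1 := fun e => hgh (inv_mul_eq_one.mp e)
    calc α g q * α h q = α g (q * α (g⁻¹ * h) q) := by rw [map_mul, ← hα_mul, mul_inv_cancel_left]
      _ = 0 := by rw [hq_orth _ hne, map_zero]

theorem stmt10_general {D : Type*} [CStarAlgebra D] [PartialOrder D] [StarOrderedRing D]
    {G : Type*} [Group G]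
    (α : G → D ≃⋆ₐ[ℂ] D)
    (hα_mul : ∀ g h : G, ∀ a : D, α (g * h) a = α g (α h a))
    (q : D) (hq_sa : IsSelfAdjoint q) (hq_idem : q * q = q)
    (hq_orth : ∀ g : G, g ≠ 1 → q * α g q = 0)
    (t : D)
    (K : Finset G) :
    ((∑ g ∈ K, α g q) * (((Real.sqrt K.card : ℂ))⁻¹ • ∑ g ∈ K, α g (q * t)) =
      ((Real.sqrt K.card : ℂ))⁻¹ • ∑ g ∈ K, α g (q * t)) ∧
    (∀ g₀ : G, g₀ ∉ K → (∑ g ∈ K, α g q) ≤ 1 - α g₀ q) ∧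
    ((∃ g₀ : G, g₀ ∉ K) → q ≠ 0 →
      (((Real.sqrt K.card : ℂ))⁻¹ • ∑ g ∈ K, α g (q * t)) ∉ unitary D) := by
  have horth := orthogonalIdempotents_translates α hα_mul hq_idem hq_orth
  have hq : IsStarProjection q := ⟨hq_idem, hq_sa⟩
  have htranslate (g : G) : IsStarProjection (α g q) := hq.map (α g)
  have hPs : (∑ g ∈ K, α g q) * (((Real.sqrt K.card : ℂ))⁻¹ • ∑ g ∈ K, α g (q * t)) =
      ((Real.sqrt K.card : ℂ))⁻¹ • ∑ g ∈ K, α g (q * t) := by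
    simp only [mul_smul_comm, Finset.mul_sum, map_mul, ← mul_assoc]
    congr 1
    exact Finset.sum_congr rfl fun h hh => by rw [horth.sum_mul_of_mem hh]
  have hproj (g₀ : G) (hg₀ : g₀ ∉ K) : IsStarProjection ((∑ g ∈ K, α g q) + α g₀ q) :=
    (horth.isStarProjection_sum (fun g => (htranslate g).isSelfAdjoint) K).add
      (htranslate g₀) (horth.sum_mul_of_notMem hg₀)
  refine ⟨hPs, fun g₀ hg₀ => le_sub_iff_add_le.mpr (hproj g₀ hg₀).le_one, ?_⟩
  rintro ⟨g₀, hg₀⟩ hq_ne hs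
  have hP : ∑ g ∈ K, α g q = 1 := eq_one_of_mul_eq_self_of_mem_unitary hs hPs
  have hle : α g₀ q ≤ 0 := by simpa [hP] using (hproj g₀ hg₀).le_one
  have hzero : α g₀ q = 0 := le_antisymm hle (htranslate g₀).nonneg
  exact hq_ne ((map_eq_zero_iff _ (α g₀).injective).mp hzero)

/-- In the Følner averaging construction with
`s = |K|^{-1/2} Σ_{g∈K} α_g(qt)`: one has `(Σ_{g∈K} α_g(q)) · s = s`; for any `g₀ ∉ K`,
`Σ_{g∈K} α_g(q) ≤ 1 − α_{g₀}(q)`; and if `G ∖ K` is nonempty and `q ≠ 0`, then `s` is not a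
unitary. -/
theorem stmt10 {D : Type*} [CStarAlgebra D] [PartialOrder D] [StarOrderedRing D]
    {G : Type*} [Group G]
    (α : G → D ≃⋆ₐ[ℂ] D)
    (hα_mul : ∀ g h : G, ∀ a : D, α (g * h) a = α g (α h a))
    (hα_one : ∀ a : D, α 1 a = a)
    (q : D) (hq_sa : IsSelfAdjoint q) (hq_idem : q * q = q)
    (hq_orth : ∀ g : G, g ≠ 1 → q * α g q = 0)
    (t : D) (ht_isom : star t * t = 1) (htqt : star t * q * t = 1)
    (K : Finset G) (hK : K.Nonempty) :
    ((∑ g ∈ K, α g q) * (((Real.sqrt K.card : ℂ))⁻¹ • ∑ g ∈ K, α g (q * t)) =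
      ((Real.sqrt K.card : ℂ))⁻¹ • ∑ g ∈ K, α g (q * t)) ∧
    (∀ g₀ : G, g₀ ∉ K → (∑ g ∈ K, α g q) ≤ 1 - α g₀ q) ∧
    ((∃ g₀ : G, g₀ ∉ K) → q ≠ 0 →
      (((Real.sqrt K.card : ℂ))⁻¹ • ∑ g ∈ K, α g (q * t)) ∉ unitary D) :=
  stmt10_general α hα_mul q hq_sa hq_idem hq_orth t K
end

section
/- Let D be a C*-algebra, d ∈ D a contraction (‖d‖ ≤ 1), and x ∈ D a positive element such that d*xd = x and d*x²d = x². Then dx = xd. -/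
/-! The commutator `z = d x - x d` satisfies `z⋆ z = x (d⋆ d) x - x²`, because the two fixed-point
relations cancel the cross terms. Since `d⋆ d ≤ 1`, this is `≤ 0`, and in a C⋆-algebra
`z⋆ z ≤ 0` forces `z = 0`. -/

theorem star_commutator_mul_self_eq_of_conj_fixed {R : Type*} [NonUnitalRing R] [StarRing R] {d x : R}
    (hx : IsSelfAdjoint x) (h1 : star d * x * d = x) (h2 : star d * (x * x) * d = x * x) :
    star (d * x - x * d) * (d * x - x * d) = x * (star d * d) * x - x * x := by
  have e1 : x * star d * x * d = x * x := by
    rw [mul_assoc, mul_assoc, ← mul_assoc (star d), h1]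
  have e2 : star d * x * d * x = x * x := by rw [h1]
  have e3 : star d * x * (x * d) = x * x := by
    rw [← h2]; noncomm_ring
  calc star (d * x - x * d) * (d * x - x * d)
      = x * (star d * d) * x - x * star d * x * d - star d * x * d * x
          + star d * x * (x * d) := by
        rw [star_sub, star_mul, star_mul, hx.star_eq]; noncomm_ring
    _ = x * (star d * d) * x - x * x := by
        rw [e1, e2, e3]; noncomm_ring

section CStarAlgebra

variable {A : Type*} [NonUnitalCStarAlgebra A] [PartialOrder A] [StarOrderedRing A]

theorem star_conjugate_star_mul_self_le_of_norm_le_one {d : A} (hd : ‖d‖ ≤ 1) (x : A) :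
    star x * (star d * d) * x ≤ star x * x := by
  have hdd : ‖star d * d‖ ≤ 1 := by
    rw [CStarRing.norm_star_mul_self]; exact mul_le_one₀ hd (norm_nonneg d) hd
  calc star x * (star d * d) * x
      ≤ ‖star d * d‖ • (star x * x) :=
        CStarAlgebra.star_left_conjugate_le_norm_smul (IsSelfAdjoint.star_mul_self d)
    _ ≤ star x * x := by
        simpa using smul_le_smul_of_nonneg_right hdd (star_mul_self_nonneg x)

theorem eq_zero_of_star_mul_self_nonpos {z : A} (h : star z * z ≤ 0) : z = 0 :=
  (CStarRing.star_mul_self_eq_zero_iff z).mp (le_antisymm h (star_mul_self_nonneg z))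

end CStarAlgebra

/-- Let `D` be a C*-algebra, `d ∈ D` a contraction, and `x ∈ D` positive
with `d*xd = x` and `d*x²d = x²`.  Then `dx = xd`. -/
theorem stmt11 {D : Type*} [NonUnitalCStarAlgebra D] [PartialOrder D] [StarOrderedRing D]
    (d x : D) (hd : ‖d‖ ≤ 1) (hx : 0 ≤ x)
    (h1 : star d * x * d = x) (h2 : star d * (x * x) * d = x * x) :
    d * x = x * d := by
  have hxs : IsSelfAdjoint x := .of_nonneg hx
  rw [← sub_eq_zero]
  apply eq_zero_of_star_mul_self_nonpos
  rw [star_commutator_mul_self_eq_of_conj_fixed hxs h1 h2, sub_nonpos]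
  simpa only [hxs.star_eq] using star_conjugate_star_mul_self_le_of_norm_le_one hd x
end
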